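/- Let f₁,f₂,f₃,f₄ be Schwartz functions on ℝ whose Fourier transforms f̂ⱼ have compact support, and suppose that sup(supp f̂₁) < inf(supp f̂₂). Then for every x ∈ ℝ, C^{1,1,1,−2}(f₁,f₂,f₃,f₄)(x) = f₁(x) · C^{1,1,−2}(f₂,f₃,f₄)(x). -/

import Mathlib

open MeasureTheory

/-- The 4-linear semi-degenerate simplex multiplier `C^{1,1,1,-2}`. -/
noncomputable def C1112 (f₁ f₂ f₃ f₄ : SchwartzMap ℝ ℂ) (x : ℝ) : ℂ :=
  ∫ ξ in {p : ℝ × ℝ × ℝ × ℝ |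
      p.1 < p.2.1 ∧ p.2.1 < p.2.2.1 ∧ p.2.2.1 < -p.2.2.2 / 2},
    FourierTransform.fourier (⇑f₁) ξ.1 * FourierTransform.fourier (⇑f₂) ξ.2.1 *
      FourierTransform.fourier (⇑f₃) ξ.2.2.1 * FourierTransform.fourier (⇑f₄) ξ.2.2.2 *
      Complex.exp ((2 : ℂ) * (Real.pi : ℂ) * Complex.I * (x : ℂ) *
        ((ξ.1 : ℂ) + (ξ.2.1 : ℂ) + (ξ.2.2.1 : ℂ) + (ξ.2.2.2 : ℂ)))

/-- The trilinear semi-degenerate simplex multiplier `C^{1,1,-2}`. -/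
noncomputable def C112 (f₁ f₂ f₃ : SchwartzMap ℝ ℂ) (x : ℝ) : ℂ :=
  ∫ ξ in {p : ℝ × ℝ × ℝ | p.1 < p.2.1 ∧ p.2.1 < -p.2.2 / 2},
    FourierTransform.fourier (⇑f₁) ξ.1 * FourierTransform.fourier (⇑f₂) ξ.2.1 *
      FourierTransform.fourier (⇑f₃) ξ.2.2 *
      Complex.exp ((2 : ℂ) * (Real.pi : ℂ) * Complex.I * (x : ℂ) *
        ((ξ.1 : ℂ) + (ξ.2.1 : ℂ) + (ξ.2.2 : ℂ)))

/-!
On the support of `f̂₁(ξ₁) f̂₂(ξ₂)` the constraint `ξ₁ < ξ₂` holds automatically, so the region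
of `C^{1,1,1,-2}` may be enlarged to `ℝ × {ξ₂ < ξ₃ < -ξ₄/2}`. There the integrand factors as
`f̂₁(ξ₁) e^{2πixξ₁}` times the integrand of `C^{1,1,-2}`, and Fubini followed by Fourier
inversion in `ξ₁` gives the product.
-/

open FourierTransform

theorem Continuous.integral_fourier_mul_exp_eq {f : ℝ → ℂ} (hc : Continuous f)
    (hf : Integrable f) (hf' : Integrable (𝓕 f)) (x : ℝ) :
    ∫ ξ : ℝ, 𝓕 f ξ * Complex.exp (2 * Real.pi * Complex.I * x * ξ) = f x := by
  rw [← congrFun (hc.fourierInv_fourier_eq hf hf') x, Real.fourierInv_eq']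
  refine integral_congr_ae (Filter.Eventually.of_forall fun ξ => ?_)
  simp only [smul_eq_mul, RCLike.inner_apply, conj_trivial]
  push_cast
  ring_nf

theorem lt_of_mem_of_csSup_lt_csInf {α : Type*} [ConditionallyCompleteLattice α] {s t : Set α}
    (hs : BddAbove s) (ht : BddBelow t) (hst : sSup s < sInf t) {a b : α} (ha : a ∈ s)
    (hb : b ∈ t) : a < b :=
  (le_csSup hs ha).trans_lt (hst.trans_le (csInf_le ht hb))

theorem setIntegral_eq_mul_of_subset_of_forall_eq_zero {α β L : Type*} [MeasurableSpace α]
    [MeasurableSpace β] [RCLike L] {μ : Measure α} {ν : Measure β} [SFinite μ] [SFinite ν]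
    {G : α × β → L} {g : α → L} {h : β → L} (hG : ∀ p, G p = g p.1 * h p.2)
    {A : Set (α × β)} {S : Set β} (hS : MeasurableSet S) (hA : A ⊆ Set.univ ×ˢ S)
    (hzero : ∀ a, ∀ b ∈ S, (a, b) ∉ A → g a = 0 ∨ h b = 0) :
    ∫ p in A, G p ∂μ.prod ν = (∫ a, g a ∂μ) * ∫ b in S, h b ∂ν := by
  simp_rw [hG]
  rw [← setIntegral_eq_of_subset_of_forall_sdiff_eq_zero (MeasurableSet.univ.prod hS) hA,
    setIntegral_prod_mul, Measure.restrict_univ]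
  rintro ⟨a, b⟩ ⟨⟨-, hb⟩, hab⟩
  rcases hzero a b hb hab with h0 | h0 <;> simp [h0]

theorem mul_cexp_mul_add_eq (z₁ z₂ z₃ z₄ c t₁ t₂ t₃ t₄ : ℂ) :
    z₁ * z₂ * z₃ * z₄ * Complex.exp (c * (t₁ + t₂ + t₃ + t₄)) =
      z₁ * Complex.exp (c * t₁) * (z₂ * z₃ * z₄ * Complex.exp (c * (t₂ + t₃ + t₄))) := by
  rw [show c * (t₁ + t₂ + t₃ + t₄) = c * t₁ + c * (t₂ + t₃ + t₄) by ring, Complex.exp_add]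
  ring

theorem C1112_splits_when_f1_frequency_separated_general (f₁ f₂ f₃ f₄ : SchwartzMap ℝ ℂ)
    (h₁ : HasCompactSupport (FourierTransform.fourier (⇑f₁)))
    (h₂ : HasCompactSupport (FourierTransform.fourier (⇑f₂)))
    (hsep : sSup (Function.support (FourierTransform.fourier (⇑f₁))) <
      sInf (Function.support (FourierTransform.fourier (⇑f₂)))) (x : ℝ) :
    C1112 f₁ f₂ f₃ f₄ x = f₁ x * C112 f₂ f₃ f₄ x := by
  have hfreq : ∀ a b : ℝ, 𝓕 (⇑f₁) a ≠ 0 → 𝓕 (⇑f₂) b ≠ 0 → a < b := fun a b =>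
    lt_of_mem_of_csSup_lt_csInf (h₁.isCompact.bddAbove.mono (subset_tsupport _))
      (h₂.isCompact.bddBelow.mono (subset_tsupport _)) hsep
  have hS : MeasurableSet {q : ℝ × ℝ × ℝ | q.1 < q.2.1 ∧ q.2.1 < -q.2.2 / 2} :=
    (measurableSet_lt measurable_fst measurable_snd.fst).inter
      (measurableSet_lt measurable_snd.fst (measurable_snd.snd.neg.div_const 2))
  rw [← f₁.continuous.integral_fourier_mul_exp_eq f₁.integrable
    (𝓕 f₁).integrable x]
  refine setIntegral_eq_mul_of_subset_of_forall_eq_zero (fun p => mul_cexp_mul_add_eq ..) hS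
    (fun p hp => ⟨trivial, hp.2⟩) ?_
  rintro a b hb hab
  by_contra! hne
  exact hab ⟨hfreq a b.1 (left_ne_zero_of_mul hne.1)
    (left_ne_zero_of_mul (left_ne_zero_of_mul (left_ne_zero_of_mul hne.2))), hb⟩

theorem C1112_splits_when_f1_frequency_separated (f₁ f₂ f₃ f₄ : SchwartzMap ℝ ℂ)
    (h₁ : HasCompactSupport (FourierTransform.fourier (⇑f₁)))
    (h₂ : HasCompactSupport (FourierTransform.fourier (⇑f₂)))
    (h₃ : HasCompactSupport (FourierTransform.fourier (⇑f₃)))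
    (h₄ : HasCompactSupport (FourierTransform.fourier (⇑f₄)))
    (hsep : sSup (Function.support (FourierTransform.fourier (⇑f₁))) <
      sInf (Function.support (FourierTransform.fourier (⇑f₂)))) (x : ℝ) :
    C1112 f₁ f₂ f₃ f₄ x = f₁ x * C112 f₂ f₃ f₄ x :=
  C1112_splits_when_f1_frequency_separated_general f₁ f₂ f₃ f₄ h₁ h₂ hsep x
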